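/- arXiv:2604.11601 — 2 statements merged into one kernel-verified Lean document; each statement's English description precedes it below -/
import Mathlib

section
/- Theorem 4 (ρ_{S2} for 2-D mapping): let N = 2M with M ≥ 2, let σ be a uniformly random permutation of Fin N, X_i = u (σ i), and define the symbol energy E_w = X_{2w}² + X_{2w+1}² for w : Fin M. Then for any two distinct symbol times w ≠ w', E[E_w · E_{w'}²] = 4ρ₂ + 4ρ₃, where ρ₂ = (N·m₂·m₄ − m₆)/(N − 1) and ρ₃ = (N²·m₂³ − 3N·m₂·m₄ + 2·m₆)/((N − 1)(N − 2)). -/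
/-- Expectation of a real-valued random variable on the finite probability space
`Equiv.Perm (Fin N)` equipped with the uniform probability measure. -/
noncomputable def permExpect (N : ℕ) (f : Equiv.Perm (Fin N) → ℝ) : ℝ :=
  (∑ σ : Equiv.Perm (Fin N), f σ) / (Fintype.card (Equiv.Perm (Fin N)) : ℝ)

/-- Empirical `k`-th moment of the amplitude block `u`. -/
noncomputable def empMoment (N : ℕ) (u : Fin N → ℝ) (k : ℕ) : ℝ :=
  (1 / (N : ℝ)) * ∑ i : Fin N, (u i) ^ k

/-- Symbol energy under 2-D mapping: `E_w = X_{2w}² + X_{2w+1}²` with `X_i = u (σ i)`,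
for a block of length `N = 2M`. -/
noncomputable def energy2D (M : ℕ) (u : Fin (2 * M) → ℝ)
    (σ : Equiv.Perm (Fin (2 * M))) (w : Fin M) : ℝ :=
  (u (σ ⟨2 * w.val, by have := w.isLt; omega⟩)) ^ 2
    + (u (σ ⟨2 * w.val + 1, by have := w.isLt; omega⟩)) ^ 2

/-!
The permutation group of `Fin N` acts transitively on injective `k`-tuples of positions, so
averaging over permutations shows that for distinct positions the tuple `(σ i₁, …, σ iₖ)` is
uniform over injective `k`-tuples. Hence `E[X_i² X_j⁴]` and `E[X_i² X_j² X_k²]` are sums over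
distinct pairs and triples, which inclusion–exclusion turns into power sums: these are `ρ₂` and
`ρ₃`. Expanding `E_w E_{w'}²` over the four distinct positions `2w, 2w+1, 2w', 2w'+1` gives four
terms of the first kind and twice two of the second.
-/

open Finset Function MulAction

section Averaging

variable {G X M : Type*} [Group G] [Fintype G] [MulAction G X] [Fintype X] [AddCommMonoid M]

theorem card_nsmul_sum_smul [IsPretransitive G X] (F : X → M) (x : X) :
    Fintype.card X • ∑ g : G, F (g • x) = Fintype.card G • ∑ y, F y := by
  have orbit_indep : ∀ y : X, ∑ g : G, F (g • y) = ∑ g : G, F (g • x) := by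
    intro y
    obtain ⟨h, rfl⟩ := exists_smul_eq G x y
    exact Fintype.sum_equiv (Equiv.mulRight h) _ _ fun g => by simp [mul_smul]
  calc Fintype.card X • ∑ g : G, F (g • x)
      = ∑ y : X, ∑ g : G, F (g • y) := by simp [orbit_indep]
    _ = ∑ g : G, ∑ y : X, F (g • y) := sum_comm
    _ = Fintype.card G • ∑ y, F y := by
      simp [fun g : G => Fintype.sum_equiv (MulAction.toPerm g) (fun y => F (g • y)) F fun _ => rfl]

end Averaging

theorem permExpect_comp_embedding {N k : ℕ} (x : Fin k ↪ Fin N) (F : (Fin k → Fin N) → ℝ) :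
    permExpect N (fun σ => F (σ ∘ x)) = (∑ y : Fin k ↪ Fin N, F y) / N.descFactorial k := by
  have : IsPretransitive (Equiv.Perm (Fin N)) (Fin k ↪ Fin N) :=
    Equiv.Perm.isMultiplyPretransitive (Fin N) k
  have hk : (N.descFactorial k : ℝ) ≠ 0 := by
    have : Nonempty (Fin k ↪ Fin N) := ⟨x⟩
    simpa [Fintype.card_embedding_eq] using Fintype.card_ne_zero (α := Fin k ↪ Fin N)
  have key := card_nsmul_sum_smul (G := Equiv.Perm (Fin N)) (fun y : Fin k ↪ Fin N => F y) x
  have hcoe : ∀ σ : Equiv.Perm (Fin N), ⇑(σ • x) = σ ∘ x := fun _ => rfl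
  rw [Fintype.card_embedding_eq, Fintype.card_fin, Fintype.card_fin] at key
  simp only [hcoe, nsmul_eq_mul] at key
  rw [permExpect, div_eq_div_iff (by positivity) hk]
  linarith

variable {α R : Type*} [Fintype α] [CommRing R]

theorem sum_embedding_finSucc [DecidableEq α] {k : ℕ} (f : α → R) (G : (Fin k → α) → R) :
    ∑ y : Fin (k + 1) ↪ α, f (y 0) * G (y ∘ Fin.succ)
      = ∑ e : Fin k ↪ α, (∑ a, f a - ∑ i, f (e i)) * G e := by
  rw [← (Equiv.embeddingFinSucc k α).symm.sum_comp, Fintype.sum_sigma]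
  refine Fintype.sum_congr _ _ fun e => ?_
  simp only [Equiv.coe_embeddingFinSucc_symm, Fin.cons_zero, Fin.cons_comp_succ, ← sum_mul]
  congr 1
  rw [eq_sub_iff_add_eq, ← sum_map univ e f, ← sum_subtype (univ.map e)ᶜ (by simp),
    sum_compl_add_sum]

theorem sum_embedding_one (h : α → R) :
    ∑ y : Fin 1 ↪ α, h (y 0) = ∑ a, h a :=
  Embedding.oneEmbeddingEquiv.sum_comp h

theorem sum_embedding_two [DecidableEq α] (f g : α → R) :
    ∑ y : Fin 2 ↪ α, f (y 0) * g (y 1) = (∑ a, f a) * (∑ a, g a) - ∑ a, f a * g a := by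
  refine (sum_embedding_finSucc f (fun v => g (v 0))).trans ?_
  simp only [Fin.sum_univ_one]
  rw [sum_embedding_one (fun a => (∑ b, f b - f a) * g a)]
  simp only [sub_mul, sum_sub_distrib, ← mul_sum]

theorem sum_embedding_three [DecidableEq α] (f : α → R) :
    ∑ y : Fin 3 ↪ α, f (y 0) * f (y 1) * f (y 2)
      = (∑ a, f a) ^ 3 - 3 * (∑ a, f a) * (∑ a, f a ^ 2) + 2 * ∑ a, f a ^ 3 := by
  simp only [mul_assoc]
  refine (sum_embedding_finSucc f (fun v => f (v 0) * f (v 1))).trans ?_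
  simp only [Fin.sum_univ_two]
  set S := ∑ a, f a
  have expand : ∀ y : Fin 2 ↪ α, (S - (f (y 0) + f (y 1))) * (f (y 0) * f (y 1))
      = S * (f (y 0) * f (y 1)) - f (y 0) ^ 2 * f (y 1) - f (y 0) * f (y 1) ^ 2 :=
    fun y => by ring
  simp only [expand, sum_sub_distrib, ← mul_sum]
  rw [sum_embedding_two f f, sum_embedding_two (fun a => f a ^ 2) f,
    sum_embedding_two f (fun a => f a ^ 2)]
  simp only [← sq, ← pow_succ, ← pow_succ']
  ring

theorem Nat.cast_descFactorial_three {S : Type*} [Ring S] (N : ℕ) :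
    (N.descFactorial 3 : S) = N * (N - 1) * (N - 2) := by
  rw [← descPochhammer_eval_eq_descFactorial]
  simp [descPochhammer_succ_eval]

section Expectation

variable {N : ℕ}

theorem permExpect_add (f g : Equiv.Perm (Fin N) → ℝ) :
    permExpect N (fun σ => f σ + g σ) = permExpect N f + permExpect N g := by
  simp only [permExpect, sum_add_distrib, add_div]

theorem permExpect_const_mul (c : ℝ) (f : Equiv.Perm (Fin N) → ℝ) :
    permExpect N (fun σ => c * f σ) = c * permExpect N f := by
  simp only [permExpect, ← mul_sum, mul_div_assoc]

theorem permExpect_mul_of_ne (f g : Fin N → ℝ) {i j : Fin N} (hij : i ≠ j) :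
    permExpect N (fun σ => f (σ i) * g (σ j))
      = ((∑ a, f a) * (∑ a, g a) - ∑ a, f a * g a) / (N * (N - 1)) := by
  rw [← Nat.cast_descFactorial_two, ← sum_embedding_two]
  exact permExpect_comp_embedding (Embedding.embFinTwo hij) (fun v => f (v 0) * g (v 1))

theorem permExpect_mul_mul_of_ne (f : Fin N → ℝ) {i j k : Fin N}
    (hij : i ≠ j) (hik : i ≠ k) (hjk : j ≠ k) :
    permExpect N (fun σ => f (σ i) * f (σ j) * f (σ k))
      = ((∑ a, f a) ^ 3 - 3 * (∑ a, f a) * (∑ a, f a ^ 2) + 2 * ∑ a, f a ^ 3)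
        / (N * (N - 1) * (N - 2)) := by
  have hinj : Injective ![i, j, k] := by
    simp only [Matrix.vecCons, Fin.cons_injective_iff]
    simp [hij, hik, hjk, Injective, eq_iff_true_of_subsingleton]
  rw [← Nat.cast_descFactorial_three, ← sum_embedding_three]
  exact permExpect_comp_embedding ⟨_, hinj⟩ (fun v => f (v 0) * f (v 1) * f (v 2))

theorem empMoment_eq_div (u : Fin N → ℝ) (k : ℕ) :
    empMoment N u k = (∑ i, u i ^ k) / N := by
  rw [empMoment, one_div_mul_eq_div]

end Expectation

section Moments

variable {N : ℕ} (u : Fin N → ℝ)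

noncomputable def rho2 : ℝ :=
  ((N : ℝ) * empMoment N u 2 * empMoment N u 4 - empMoment N u 6) / ((N : ℝ) - 1)

noncomputable def rho3 : ℝ :=
  ((N : ℝ) ^ 2 * empMoment N u 2 ^ 3 - 3 * (N : ℝ) * empMoment N u 2 * empMoment N u 4
      + 2 * empMoment N u 6) / (((N : ℝ) - 1) * ((N : ℝ) - 2))

theorem permExpect_sq_mul_pow_four {i j : Fin N} (hij : i ≠ j) :
    permExpect N (fun σ => u (σ i) ^ 2 * u (σ j) ^ 4) = rho2 u := by
  have hN : (N : ℝ) ≠ 0 := by exact_mod_cast i.pos.ne'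
  rw [permExpect_mul_of_ne (fun a => u a ^ 2) (fun a => u a ^ 4) hij, rho2,
    empMoment_eq_div, empMoment_eq_div, empMoment_eq_div]
  simp only [← pow_add]
  field_simp

theorem permExpect_sq_mul_sq_mul_sq {i j k : Fin N} (hij : i ≠ j) (hik : i ≠ k) (hjk : j ≠ k) :
    permExpect N (fun σ => u (σ i) ^ 2 * u (σ j) ^ 2 * u (σ k) ^ 2) = rho3 u := by
  have hN : (N : ℝ) ≠ 0 := by exact_mod_cast i.pos.ne'
  rw [permExpect_mul_mul_of_ne (fun a => u a ^ 2) hij hik hjk, rho3,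
    empMoment_eq_div, empMoment_eq_div, empMoment_eq_div]
  simp only [← pow_mul]
  field_simp

end Moments

theorem rhoS2_twoD_general (M : ℕ) (u : Fin (2 * M) → ℝ)
    (w w' : Fin M) (hww' : w ≠ w') :
    permExpect (2 * M) (fun σ => energy2D M u σ w * (energy2D M u σ w') ^ 2)
      = 4 * ((((2 * M : ℕ) : ℝ) * empMoment (2 * M) u 2 * empMoment (2 * M) u 4
              - empMoment (2 * M) u 6) / (((2 * M : ℕ) : ℝ) - 1))
        + 4 * ((((2 * M : ℕ) : ℝ) ^ 2 * (empMoment (2 * M) u 2) ^ 3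
              - 3 * ((2 * M : ℕ) : ℝ) * empMoment (2 * M) u 2 * empMoment (2 * M) u 4
              + 2 * empMoment (2 * M) u 6)
            / ((((2 * M : ℕ) : ℝ) - 1) * (((2 * M : ℕ) : ℝ) - 2))) := by
  have hw : (w : ℕ) ≠ w' := Fin.val_ne_of_ne hww'
  set i₁ : Fin (2 * M) := ⟨2 * w, by omega⟩
  set i₂ : Fin (2 * M) := ⟨2 * w + 1, by omega⟩
  set j₁ : Fin (2 * M) := ⟨2 * w', by omega⟩
  set j₂ : Fin (2 * M) := ⟨2 * w' + 1, by omega⟩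
  have expand : ∀ σ : Equiv.Perm (Fin (2 * M)), energy2D M u σ w * energy2D M u σ w' ^ 2
      = u (σ i₁) ^ 2 * u (σ j₁) ^ 4 + u (σ i₁) ^ 2 * u (σ j₂) ^ 4
        + u (σ i₂) ^ 2 * u (σ j₁) ^ 4 + u (σ i₂) ^ 2 * u (σ j₂) ^ 4
        + 2 * (u (σ i₁) ^ 2 * u (σ j₁) ^ 2 * u (σ j₂) ^ 2)
        + 2 * (u (σ i₂) ^ 2 * u (σ j₁) ^ 2 * u (σ j₂) ^ 2) :=
    fun σ => by rw [energy2D, energy2D]; ring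
  have hne : ∀ {a b : ℕ} {ha hb}, a ≠ b → (⟨a, ha⟩ : Fin (2 * M)) ≠ ⟨b, hb⟩ :=
    fun h => Fin.ne_of_val_ne h
  simp only [expand, permExpect_add, permExpect_const_mul]
  rw [permExpect_sq_mul_pow_four u (hne (by omega) : i₁ ≠ j₁),
    permExpect_sq_mul_pow_four u (hne (by omega) : i₁ ≠ j₂),
    permExpect_sq_mul_pow_four u (hne (by omega) : i₂ ≠ j₁),
    permExpect_sq_mul_pow_four u (hne (by omega) : i₂ ≠ j₂),
    permExpect_sq_mul_sq_mul_sq u (hne (by omega) : i₁ ≠ j₁) (hne (by omega)) (hne (by omega)),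
    permExpect_sq_mul_sq_mul_sq u (hne (by omega) : i₂ ≠ j₁) (hne (by omega)) (hne (by omega)),
    rho2, rho3]
  ring

/-- Theorem 4 (ρ_{S2} for 2-D mapping): for `N = 2M`, `M ≥ 2`, and distinct symbol
times `w ≠ w'`, `E[E_w·E_{w'}²] = 4ρ₂ + 4ρ₃` with
`ρ₂ = (N·m₂·m₄ − m₆)/(N−1)` and `ρ₃ = (N²·m₂³ − 3N·m₂·m₄ + 2·m₆)/((N−1)(N−2))`. -/
theorem rhoS2_twoD (M : ℕ) (hM : 2 ≤ M) (u : Fin (2 * M) → ℝ)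
    (w w' : Fin M) (hww' : w ≠ w') :
    permExpect (2 * M) (fun σ => energy2D M u σ w * (energy2D M u σ w') ^ 2)
      = 4 * ((((2 * M : ℕ) : ℝ) * empMoment (2 * M) u 2 * empMoment (2 * M) u 4
              - empMoment (2 * M) u 6) / (((2 * M : ℕ) : ℝ) - 1))
        + 4 * ((((2 * M : ℕ) : ℝ) ^ 2 * (empMoment (2 * M) u 2) ^ 3
              - 3 * ((2 * M : ℕ) : ℝ) * empMoment (2 * M) u 2 * empMoment (2 * M) u 4
              + 2 * empMoment (2 * M) u 6)
            / ((((2 * M : ℕ) : ℝ) - 1) * (((2 * M : ℕ) : ℝ) - 2))) :=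
  rhoS2_twoD_general M u w w' hww'
end

section
/- Theorem 6 (time-averaged second–fourth-order correlation of a block-i.i.d. energy sequence): assume additionally that E[(B_k i)²] = Q for every i and E[B_k i · (B_k j)²] = ρ' for all i ≠ j. Then with the spliced energy sequence E_n = B_{n / M_s} (n mod M_s), for every integer delay τ > 0, (1/M_s) · ∑_{w=0}^{M_s−1} E[E_w · (E_{w+τ})²] equals (τ·P·Q + (M_s − τ)·ρ')/M_s if τ < M_s, and equals P·Q if τ ≥ M_s. -/
open MeasureTheory ProbabilityTheory Finset

/-!
Within the first block, `E_w` and `E_{w+τ}` are two distinct coordinates of `B_0`, so the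
correlation is `ρ'`; once `w + τ` leaves the first block, `E_{w+τ}` is a coordinate of an
independent block and the correlation factors as `P · Q`. Exactly `min τ M_s` of the `M_s`
positions `w` in the average are of the second kind.
-/

def splice {Ω : Type*} {M : ℕ} (hM : 0 < M) (B : ℕ → Ω → Fin M → ℝ) (n : ℕ) (ω : Ω) : ℝ :=
  B (n / M) ω ⟨n % M, Nat.mod_lt n hM⟩

lemma splice_of_lt {Ω : Type*} {M : ℕ} (hM : 0 < M) (B : ℕ → Ω → Fin M → ℝ) {n : ℕ}
    (hn : n < M) : splice hM B n = fun ω => B 0 ω ⟨n, hn⟩ := by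
  funext ω
  simp only [splice, Nat.div_eq_of_lt hn, Nat.mod_eq_of_lt hn]

lemma sum_range_ite_add_lt {β : Type*} [AddCommMonoid β] (M τ : ℕ) (a b : β) :
    ∑ w ∈ range M, (if w + τ < M then a else b) = (M - τ) • a + min τ M • b := by
  have hlt : (range M).filter (fun w => w + τ < M) = range (M - τ) := by
    ext w; simp only [mem_filter, mem_range]; omega
  have hge : (range M).filter (fun w => ¬ w + τ < M) = Ico (M - τ) M := by
    ext w; simp only [mem_filter, mem_range, mem_Ico]; omega
  rw [sum_ite, hlt, hge, sum_const, sum_const, card_range, Nat.card_Ico]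
  congr 2
  omega

section

variable {Ω : Type*} [MeasurableSpace Ω] {μ : Measure Ω} {M : ℕ} {B : ℕ → Ω → Fin M → ℝ}

lemma integral_splice_mul_sq_of_lt (hM : 0 < M) {ρ' : ℝ}
    (hpair' : ∀ i j : Fin M, i ≠ j → ∫ ω, B 0 ω i * (B 0 ω j) ^ 2 ∂μ = ρ')
    {w τ : ℕ} (hτ : 0 < τ) (hwτ : w + τ < M) :
    ∫ ω, splice hM B w ω * (splice hM B (w + τ) ω) ^ 2 ∂μ = ρ' := by
  rw [splice_of_lt hM B (by omega : w < M), splice_of_lt hM B hwτ]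
  exact hpair' _ _ (by simp only [ne_eq, Fin.mk.injEq]; omega)

lemma integral_splice_mul_sq_of_le (hM : 0 < M) {P Q : ℝ} (hmeas : ∀ k, Measurable (B k))
    (hindep : iIndepFun B μ) (hmean : ∀ i, ∫ ω, B 0 ω i ∂μ = P)
    (hsq : ∀ k i, ∫ ω, (B k ω i) ^ 2 ∂μ = Q) {w τ : ℕ} (hw : w < M) (hwτ : M ≤ w + τ) :
    ∫ ω, splice hM B w ω * (splice hM B (w + τ) ω) ^ 2 ∂μ = P * Q := by
  have hblock : (w + τ) / M ≠ 0 := (Nat.div_pos hwτ hM).ne'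
  rw [splice_of_lt hM B hw, ← hmean ⟨w, hw⟩, ← hsq ((w + τ) / M) ⟨(w + τ) % M, Nat.mod_lt _ hM⟩]
  exact (hindep.indepFun hblock.symm).integral_fun_comp_mul_comp (hmeas _).aemeasurable
    (hmeas _).aemeasurable (continuous_apply _).aestronglyMeasurable
    ((continuous_apply _).pow 2).aestronglyMeasurable

end

theorem timeAvg_second_fourth_corr_general
    {Ω : Type*} [MeasureSpace Ω]
    (Ms : ℕ) (hMs : 0 < Ms) (P Q ρ' : ℝ)
    (B : ℕ → Ω → (Fin Ms → ℝ))
    (hmeas : ∀ k, Measurable (B k))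
    (hindep : iIndepFun B ℙ)
    (hmean : ∀ k (i : Fin Ms), (∫ ω, B k ω i ∂ℙ) = P)
    (hsq : ∀ k (i : Fin Ms), (∫ ω, (B k ω i) ^ 2 ∂ℙ) = Q)
    (hpair' : ∀ k (i j : Fin Ms), i ≠ j → (∫ ω, B k ω i * (B k ω j) ^ 2 ∂ℙ) = ρ')
    (E : ℕ → Ω → ℝ)
    (hE : ∀ n ω, E n ω = B (n / Ms) ω ⟨n % Ms, Nat.mod_lt n hMs⟩)
    (τ : ℕ) (hτ : 0 < τ) :
    (1 / (Ms : ℝ)) * ∑ w ∈ Finset.range Ms, ∫ ω, E w ω * (E (w + τ) ω) ^ 2 ∂ℙ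
      = if τ < Ms then ((τ : ℝ) * P * Q + ((Ms : ℝ) - (τ : ℝ)) * ρ') / (Ms : ℝ)
        else P * Q := by
  obtain rfl : E = splice hMs B := funext fun n => funext (hE n)
  have hterm : ∀ w ∈ range Ms, ∫ ω, splice hMs B w ω * (splice hMs B (w + τ) ω) ^ 2 ∂ℙ =
      if w + τ < Ms then ρ' else P * Q := by
    intro w hw
    split_ifs with hwτ
    · exact integral_splice_mul_sq_of_lt hMs (hpair' 0) hτ hwτ
    · exact integral_splice_mul_sq_of_le hMs hmeas hindep (hmean 0) hsq (mem_range.1 hw)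
        (not_lt.1 hwτ)
  have hMs' : (Ms : ℝ) ≠ 0 := by positivity
  rw [sum_congr rfl hterm, sum_range_ite_add_lt]
  split_ifs with hτMs
  · rw [min_eq_left hτMs.le, nsmul_eq_mul, nsmul_eq_mul, Nat.cast_sub hτMs.le]
    field_simp
    ring
  · rw [Nat.sub_eq_zero_of_le (not_lt.1 hτMs), min_eq_right (not_lt.1 hτMs), zero_smul,
      zero_add, nsmul_eq_mul]
    field_simp

/-- Theorem 6 (time-averaged second–fourth-order correlation of a block-i.i.d. energy
sequence): with per-position mean `P`, second moment `Q`, off-diagonal correlations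
`ρ = E[B_k i · B_k j]` and `ρ' = E[B_k i · (B_k j)²]`, splicing i.i.d. blocks of
length `M_s`, for every delay `τ > 0` the time-averaged second–fourth correlation
equals `(τ·P·Q + (M_s − τ)·ρ')/M_s` if `τ < M_s` and `P·Q` if `τ ≥ M_s`. -/
theorem timeAvg_second_fourth_corr
    {Ω : Type*} [MeasureSpace Ω] [IsProbabilityMeasure (ℙ : Measure Ω)]
    (Ms : ℕ) (hMs : 0 < Ms) (P Q ρ ρ' : ℝ)
    (B : ℕ → Ω → (Fin Ms → ℝ))
    (hmeas : ∀ k, Measurable (B k))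
    (hindep : iIndepFun B ℙ)
    (hident : ∀ k, IdentDistrib (B k) (B 0) ℙ ℙ)
    (hint1 : ∀ k (i : Fin Ms), Integrable (fun ω => B k ω i) ℙ)
    (hint2 : ∀ k k' (i j : Fin Ms), Integrable (fun ω => B k ω i * B k' ω j) ℙ)
    (hint3 : ∀ k k' k'' (i j l : Fin Ms),
      Integrable (fun ω => B k ω i * B k' ω j * B k'' ω l) ℙ)
    (hmean : ∀ k (i : Fin Ms), (∫ ω, B k ω i ∂ℙ) = P)
    (hsq : ∀ k (i : Fin Ms), (∫ ω, (B k ω i) ^ 2 ∂ℙ) = Q)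
    (hpair : ∀ k (i j : Fin Ms), i ≠ j → (∫ ω, B k ω i * B k ω j ∂ℙ) = ρ)
    (hpair' : ∀ k (i j : Fin Ms), i ≠ j → (∫ ω, B k ω i * (B k ω j) ^ 2 ∂ℙ) = ρ')
    (E : ℕ → Ω → ℝ)
    (hE : ∀ n ω, E n ω = B (n / Ms) ω ⟨n % Ms, Nat.mod_lt n hMs⟩)
    (τ : ℕ) (hτ : 0 < τ) :
    (1 / (Ms : ℝ)) * ∑ w ∈ Finset.range Ms, ∫ ω, E w ω * (E (w + τ) ω) ^ 2 ∂ℙ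
      = if τ < Ms then ((τ : ℝ) * P * Q + ((Ms : ℝ) - (τ : ℝ)) * ρ') / (Ms : ℝ)
        else P * Q :=
  timeAvg_second_fourth_corr_general Ms hMs P Q ρ' B hmeas hindep hmean hsq hpair' E hE τ hτ
end
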